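/- arXiv:1608.03055 — 4 statements merged into one kernel-verified Lean document; each statement's English description precedes it below -/
import Mathlib

section
/- Let Γ be a generalised quadrangle of order (q²,q) with a doubly subtended subquadrangle Γ' of order (q,q), and let ℓ be an external line with antipode ℓ̄. Then a line k concurrent with ℓ is concurrent with ℓ̄ if and only if k meets Γ'. -/
structure GenQuad (P L : Type*) (I : P → L → Prop) (s t : ℕ) : Prop where
  unique_line : ∀ ⦃p q : P⦄, p ≠ q → ∀ ⦃l m : L⦄, I p l → I q l → I p m → I q m → l = m
  point_lines : ∀ p : P, {l : L | I p l}.ncard = t + 1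
  line_points : ∀ l : L, {p : P | I p l}.ncard = s + 1
  gq : ∀ (p : P) (l : L), ¬ I p l → ∃! r : P, I r l ∧ ∃ m : L, I p m ∧ I r m

/-- Two lines are concurrent if they are distinct and share a point. -/
def Concurrent {P L : Type*} (I : P → L → Prop) (k l : L) : Prop :=
  k ≠ l ∧ ∃ p : P, I p k ∧ I p l

/-- Let `ℓ` be an external line with antipode `ℓbar` (a distinct, nonconcurrent external
line subtending the same spread of `Γ'`).  Then a line `k` concurrent with `ℓ` is
concurrent with `ℓbar` if and only if `k` meets `Γ'`.  Here every external point lies on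
a unique line meeting `Γ'`. -/
theorem statement_3 {P L : Type*} {I : P → L → Prop} {q : ℕ}
    (hΓ : GenQuad P L I (q ^ 2) q)
    (P' : Set P)
    (hmeet : ∀ p : P, p ∉ P' → ∃! l : L, I p l ∧ ∃ x ∈ P', I x l)
    (ℓ ℓbar : L)
    (hextℓ : ∀ p ∈ P', ¬ I p ℓ) (hextℓbar : ∀ p ∈ P', ¬ I p ℓbar)
    (hne : ℓ ≠ ℓbar)
    (hnc : ¬ Concurrent I ℓ ℓbar)
    (hspread : ∀ m : L, (∃ x ∈ P', I x m) →
      (Concurrent I m ℓ ↔ Concurrent I m ℓbar)) :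
    ∀ k : L, Concurrent I k ℓ →
      (Concurrent I k ℓbar ↔ ∃ x ∈ P', I x k) := by
  intro k hkℓ
  constructor
  · rintro ⟨hkne, p', hp'k, hp'b⟩
    obtain ⟨hkℓne, p, hpk, hpℓ⟩ := hkℓ
    by_contra hnot
    -- p is not in P'
    have hpP' : p ∉ P' := fun h => hextℓ p h hpℓ
    -- p is not on ℓbar
    have hpb : ¬ I p ℓbar := fun h => hnc ⟨hne, p, hpℓ, h⟩
    -- p ≠ p'
    have hpp' : p ≠ p' := fun h => hpb (h ▸ hp'b)
    -- unique line m through p meeting Γ'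
    obtain ⟨m, ⟨hpm, hm'⟩, _⟩ := hmeet p hpP'
    -- m ≠ ℓ and m ≠ ℓbar since they are external
    have hmℓ : m ≠ ℓ := by
      rintro rfl; obtain ⟨x, hx, hxm⟩ := hm'; exact hextℓ x hx hxm
    -- m concurrent with ℓ, hence with ℓbar
    have hmconc : Concurrent I m ℓbar :=
      (hspread m hm').mp ⟨hmℓ, p, hpm, hpℓ⟩
    obtain ⟨hmb, u, hum, hub⟩ := hmconc
    -- by GQ uniqueness, u = p'
    obtain ⟨r, hr, hruniq⟩ := hΓ.gq p ℓbar hpb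
    have hu : u = r := hruniq u ⟨hub, m, hpm, hum⟩
    have hp'r : p' = r := hruniq p' ⟨hp'b, k, hpk, hp'k⟩
    have hup' : u = p' := hu.trans hp'r.symm
    -- now k and m both pass through p and p', so k = m
    have hkm : k = m := hΓ.unique_line hpp' hpk hp'k hpm (hup' ▸ hum)
    exact hnot (hkm ▸ hm')
  · intro hk
    exact (hspread k hk).mp hkℓ
end

section
/- Let Γ be a GQ of order (q²,q) with doubly subtended subquadrangle Γ' of order (q,q). Let ℓ and n be nonconcurrent external lines with n ≠ ℓ̄. If n is concurrent with ℓ̄, then exactly q² external lines are concurrent with both ℓ and n; if n is concurrent with neither ℓ nor ℓ̄, then exactly q²−q external lines are concurrent with both. -/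

lemma transversal_count {P L : Type*} {I : P → L → Prop} {s t : ℕ}
    (hΓ : GenQuad P L I s t) {ℓ n : L} (hne : n ≠ ℓ) (hnc : ¬ Concurrent I n ℓ) :
    {k : L | Concurrent I k ℓ ∧ Concurrent I k n}.ncard = s + 1 := by
  classical
  have hno : ∀ p, I p n → ¬ I p ℓ := fun p hpn hpl => hnc ⟨hne, p, hpn, hpl⟩
  let g : P → L := fun p =>
    if h : I p ℓ then ℓ else ((hΓ.gq p ℓ h).choose_spec.1.2).choose
  have hg : ∀ p (hpn : I p n), I p (g p) ∧ I ((hΓ.gq p ℓ (hno p hpn)).choose) (g p)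
      ∧ I ((hΓ.gq p ℓ (hno p hpn)).choose) ℓ := by
    intro p hpn
    have h := hno p hpn
    have e := hΓ.gq p ℓ h
    simp only [g, dif_neg h]
    exact ⟨(e.choose_spec.1.2).choose_spec.1, (e.choose_spec.1.2).choose_spec.2,
      e.choose_spec.1.1⟩
  have himg : {k : L | Concurrent I k ℓ ∧ Concurrent I k n} = g '' {p | I p n} := by
    ext k
    simp only [Set.mem_setOf_eq, Set.mem_image]
    constructor
    · rintro ⟨⟨hkℓ, y, hyk, hyℓ⟩, ⟨hkn, x, hxk, hxn⟩⟩
      refine ⟨x, hxn, ?_⟩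
      have h := hno x hxn
      have e := hΓ.gq x ℓ h
      -- y satisfies the unique property, with m = k
      have hy : e.choose = y := (e.choose_spec.2 y ⟨hyℓ, k, hxk, hyk⟩).symm
      obtain ⟨hxg, hrg, hrℓ⟩ := hg x hxn
      rw [hy] at hrg
      have hxy : x ≠ y := fun hxy => h (hxy ▸ hyℓ)
      exact hΓ.unique_line hxy hxg hrg hxk hyk
    · rintro ⟨p, hpn, rfl⟩
      obtain ⟨hpg, hrg, hrℓ⟩ := hg p hpn
      have h := hno p hpn
      have hgℓ : g p ≠ ℓ := fun he => h (he ▸ hpg)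
      have hgn : g p ≠ n := by
        intro he
        exact hno _ (he ▸ hrg) hrℓ
      exact ⟨⟨hgℓ, _, hrg, hrℓ⟩, ⟨hgn, p, hpg, hpn⟩⟩
  have hinj : Set.InjOn g {p | I p n} := by
    intro p hp p' hp' hgg
    by_contra hpp
    obtain ⟨hpg, -, -⟩ := hg p hp
    obtain ⟨hpg', hrg', hrℓ'⟩ := hg p' hp'
    rw [← hgg] at hpg' hrg'
    have : g p = n := hΓ.unique_line hpp hpg hpg' hp hp'
    exact hno _ (this ▸ hrg') hrℓ'
  rw [himg, Set.ncard_image_of_injOn hinj, hΓ.line_points n]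

/-- Let `ℓ` and `n` be nonconcurrent external lines with `n ≠ ℓbar`, where `ℓbar` is the
antipode of `ℓ`.  Given Brown's intersection numbers for the subtended spreads, the
number of external lines concurrent with both `ℓ` and `n` is `q²` if `n` is concurrent
with `ℓbar`, and `q² - q` if `n` is concurrent with neither `ℓ` nor `ℓbar`. -/
theorem statement_6 {P L : Type*} [Fintype L] {I : P → L → Prop} {q : ℕ}
    (hq : 2 ≤ q)
    (hΓ : GenQuad P L I (q ^ 2) q)
    (P' : Set P)
    (hmeet : ∀ p : P, p ∉ P' → ∃! l : L, I p l ∧ ∃ x ∈ P', I x l)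
    (ℓ ℓbar n : L)
    (hextℓ : ∀ p ∈ P', ¬ I p ℓ) (hextℓbar : ∀ p ∈ P', ¬ I p ℓbar)
    (hextn : ∀ p ∈ P', ¬ I p n)
    (hne : ℓ ≠ ℓbar) (hncℓ : ¬ Concurrent I ℓ ℓbar)
    (hspread : ∀ m : L, (∃ x ∈ P', I x m) →
      (Concurrent I m ℓ ↔ Concurrent I m ℓbar))
    (hnℓ : n ≠ ℓ) (hnℓbar : n ≠ ℓbar) (hnc : ¬ Concurrent I n ℓ)
    (hBrown1 : Concurrent I n ℓbar →
      {m : L | (∃ x ∈ P', I x m) ∧ Concurrent I m ℓ ∧ Concurrent I m n}.ncard = 1)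
    (hBrown2 : ¬ Concurrent I n ℓbar →
      {m : L | (∃ x ∈ P', I x m) ∧ Concurrent I m ℓ ∧ Concurrent I m n}.ncard = q + 1) :
    (Concurrent I n ℓbar →
      {k : L | (∀ p ∈ P', ¬ I p k) ∧ Concurrent I k ℓ ∧ Concurrent I k n}.ncard = q ^ 2) ∧
    (¬ Concurrent I n ℓbar →
      {k : L | (∀ p ∈ P', ¬ I p k) ∧ Concurrent I k ℓ ∧ Concurrent I k n}.ncard
        = q ^ 2 - q) := by
  classical
  have hT := transversal_count hΓ hnℓ hnc
  set T := {k : L | Concurrent I k ℓ ∧ Concurrent I k n} with hTdef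
  set A := {m : L | (∃ x ∈ P', I x m) ∧ Concurrent I m ℓ ∧ Concurrent I m n} with hAdef
  set B := {k : L | (∀ p ∈ P', ¬ I p k) ∧ Concurrent I k ℓ ∧ Concurrent I k n} with hBdef
  have hAsub : A ⊆ T := fun k hk => hk.2
  have hB : B = T \ A := by
    ext k
    simp only [hBdef, hTdef, hAdef, Set.mem_diff, Set.mem_setOf_eq]
    constructor
    · rintro ⟨hx, h1, h2⟩
      exact ⟨⟨h1, h2⟩, fun ⟨⟨x, hx', hxk⟩, _⟩ => hx x hx' hxk⟩
    · rintro ⟨⟨h1, h2⟩, hna⟩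
      refine ⟨fun p hp hpk => hna ⟨⟨p, hp, hpk⟩, h1, h2⟩, h1, h2⟩
  have hBcard : B.ncard = (q ^ 2 + 1) - A.ncard := by
    rw [hB, Set.ncard_diff hAsub, hT]
  have hqle : q ≤ q ^ 2 := by nlinarith
  constructor
  · intro h
    rw [hBcard, hBrown1 h]
    omega
  · intro h
    rw [hBcard, hBrown2 h]
    omega
end

section
/- Let Γ be a GQ of order (q²,q) with doubly subtended subquadrangle Γ' of order (q,q) and involutory automorphism σ fixing Γ' pointwise. For an external point P with image P̄ = P^σ, the characteristic vector χ_{[P]} of the external lines through P satisfies χ_{[P]}A₃ = j + (q−2)χ_{[P]} − χ_W − χ_{[P̄]}, where W is the set of external lines concurrent with the unique line on P meeting Γ' but incident with neither P nor P̄. -/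
/-! An external line `n` either passes through `p0` or not. If it does, the external lines on
`p0` concurrent with `n` are the `q + 1` lines on `p0` other than `m0` and `n`. If it does not,
the GQ axiom gives exactly one line on `p0` concurrent with `n`; it is external unless it is
`m0`, which happens exactly when `n` is concurrent with `m0` — in particular when `pbar`
lies on `n`. -/

open Finset

section

variable {P L : Type*} {I : P → L → Prop}

theorem Concurrent.symm {k l : L} (h : Concurrent I k l) : Concurrent I l k :=
  ⟨h.1.symm, h.2.imp fun _ hp => hp.symm⟩

theorem concurrent_iff_ne_of_incident {p : P} {k n : L} (hpk : I p k) (hpn : I p n) :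
    Concurrent I k n ↔ k ≠ n :=
  ⟨And.left, fun h => ⟨h, p, hpk, hpn⟩⟩

namespace GenQuad

variable {s t : ℕ}

theorem existsUnique_line_concurrent (hΓ : GenQuad P L I s t) {p : P} {n : L}
    (hpn : ¬ I p n) : ∃! k, I p k ∧ Concurrent I k n := by
  obtain ⟨r, ⟨hrn, m, hpm, hrm⟩, hr⟩ := hΓ.gq p n hpn
  refine ⟨m, ⟨hpm, fun h => hpn (h ▸ hpm), r, hrm, hrn⟩, ?_⟩
  rintro k ⟨hpk, -, x, hxk, hxn⟩
  have hxp : x ≠ p := fun h => hpn (h ▸ hxn)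
  obtain rfl : x = r := hr x ⟨hxn, k, hpk, hxk⟩
  exact hΓ.unique_line hxp hxk hpk hrm hpm

open scoped Classical

variable [Fintype L]

theorem card_lines_through (hΓ : GenQuad P L I s t) (p : P) : #{l | I p l} = t + 1 := by
  have h := hΓ.point_lines p
  rwa [Set.ncard_eq_toFinset_card', Set.toFinset_ofPred] at h

theorem card_lines_through_concurrent_of_incident (hΓ : GenQuad P L I s t) {p : P} {m n : L}
    (hpm : I p m) (hpn : I p n) (hmn : m ≠ n) :
    #{k | I p k ∧ k ≠ m ∧ Concurrent I k n} + 1 = t := by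
  have hset : ({k | I p k ∧ k ≠ m ∧ Concurrent I k n} : Finset L) =
      ({l | I p l} : Finset L) \ {m, n} := by
    ext k
    simp only [mem_filter, mem_univ, true_and, mem_sdiff, mem_insert, mem_singleton, not_or]
    constructor
    · rintro ⟨hpk, hkm, hkn⟩
      exact ⟨hpk, hkm, (concurrent_iff_ne_of_incident hpk hpn).1 hkn⟩
    · rintro ⟨hpk, hkm, hkn⟩
      exact ⟨hpk, hkm, (concurrent_iff_ne_of_incident hpk hpn).2 hkn⟩
  have hsub : ({m, n} : Finset L) ⊆ ({l | I p l} : Finset L) := by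
    simp [insert_subset_iff, hpm, hpn]
  have hcard := card_le_card hsub
  rw [card_pair hmn, hΓ.card_lines_through p] at hcard
  rw [hset, card_sdiff_of_subset hsub, hΓ.card_lines_through p, card_pair hmn]
  omega

theorem card_lines_through_concurrent_of_not_incident (hΓ : GenQuad P L I s t) {p : P}
    {m n : L} (hpm : I p m) (hpn : ¬ I p n) :
    #{k | I p k ∧ k ≠ m ∧ Concurrent I k n} = if Concurrent I m n then 0 else 1 := by
  obtain ⟨k₀, hk₀, huniq⟩ := hΓ.existsUnique_line_concurrent hpn
  split_ifs with hmn
  · rw [card_eq_zero, filter_eq_empty_iff]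
    rintro k - ⟨hpk, hkm, hkn⟩
    exact hkm ((huniq k ⟨hpk, hkn⟩).trans (huniq m ⟨hpm, hmn⟩).symm)
  · rw [card_eq_one]
    refine ⟨k₀, eq_singleton_iff_unique_mem.2 ⟨?_, fun k hk => ?_⟩⟩
    · exact mem_filter.2 ⟨mem_univ _, hk₀.1, fun h => hmn (h ▸ hk₀.2), hk₀.2⟩
    · obtain ⟨hpk, -, hkn⟩ := (mem_filter.1 hk).2
      exact huniq k ⟨hpk, hkn⟩

end GenQuad

end

open scoped Classical in
theorem statement_11_general {P L : Type*} [Fintype L] {I : P → L → Prop} {q : ℕ}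
    (hΓ : GenQuad P L I (q ^ 2) q)
    (P' : Set P)
    (p0 pbar : P) (hpp : p0 ≠ pbar)
    (m0 : L) (hm0p0 : I p0 m0) (hm0pbar : I pbar m0) (hm0meets : ∃ x ∈ P', I x m0)
    (hm0uniq : ∀ l : L, I p0 l → (∃ x ∈ P', I x l) → l = m0) :
    ∀ n : L, (∀ p ∈ P', ¬ I p n) →
      (∑ k : L, (if (∀ p ∈ P', ¬ I p k) ∧ I p0 k then (1 : ℝ) else 0) *
          (if (∀ p ∈ P', ¬ I p k) ∧ Concurrent I k n then 1 else 0))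
        = 1 + ((q : ℝ) - 2) * (if I p0 n then (1 : ℝ) else 0)
          - (if Concurrent I n m0 ∧ ¬ I p0 n ∧ ¬ I pbar n then (1 : ℝ) else 0)
          - (if I pbar n then (1 : ℝ) else 0) := by
  intro n hn
  obtain ⟨x0, hx0, hx0m⟩ := hm0meets
  have hm0n : m0 ≠ n := by rintro rfl; exact hn x0 hx0 hx0m
  have hext : ∀ k, I p0 k → ((∀ p ∈ P', ¬ I p k) ↔ k ≠ m0) := fun k hk =>
    ⟨by rintro h rfl; exact h x0 hx0 hx0m, fun hkm p hp hpk => hkm (hm0uniq k hk ⟨p, hp, hpk⟩)⟩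
  simp only [ite_zero_mul_ite_zero, mul_one, sum_boole]
  rw [filter_congr (q := fun k => I p0 k ∧ k ≠ m0 ∧ Concurrent I k n) fun k _ => ?_]
  · by_cases hp0n : I p0 n
    · have hpbarn : ¬ I pbar n := fun h => hm0n (hΓ.unique_line hpp hm0p0 hm0pbar hp0n h)
      rw [if_pos hp0n, if_neg (fun h => h.2.1 hp0n), if_neg hpbarn,
        ← hΓ.card_lines_through_concurrent_of_incident hm0p0 hp0n hm0n]
      push_cast
      ring
    rw [hΓ.card_lines_through_concurrent_of_not_incident hm0p0 hp0n]
    by_cases hpbarn : I pbar n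
    · have hm0n_conc : Concurrent I m0 n := ⟨hm0n, pbar, hm0pbar, hpbarn⟩
      simp [hm0n_conc, hp0n, hpbarn]
    · have hconc_comm : Concurrent I n m0 ↔ Concurrent I m0 n := ⟨.symm, .symm⟩
      by_cases hm0n_conc : Concurrent I m0 n <;> simp [hconc_comm, hm0n_conc, hp0n, hpbarn]
  · constructor
    · rintro ⟨⟨hk, hpk⟩, -, hkn⟩
      exact ⟨hpk, (hext k hpk).1 hk, hkn⟩
    · rintro ⟨hpk, hkm, hkn⟩
      have hk := (hext k hpk).2 hkm
      exact ⟨⟨hk, hpk⟩, hk, hkn⟩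

open scoped Classical in
/-- For an external point `p0` with image `pbar` under the involution, the unique line
`m0` through `p0` meeting `Γ'` also passes through `pbar`, and
`χ_{[p0]} A₃ = j + (q-2) χ_{[p0]} - χ_W - χ_{[pbar]}` on external lines, where `W` is
the set of external lines concurrent with `m0` but incident with neither `p0` nor
`pbar`. -/
theorem statement_11 {P L : Type*} [Fintype L] {I : P → L → Prop} {q : ℕ}
    (hΓ : GenQuad P L I (q ^ 2) q)
    (P' : Set P)
    (p0 pbar : P) (hp0 : p0 ∉ P') (hpbar : pbar ∉ P') (hpp : p0 ≠ pbar)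
    (m0 : L) (hm0p0 : I p0 m0) (hm0pbar : I pbar m0) (hm0meets : ∃ x ∈ P', I x m0)
    (hm0uniq : ∀ l : L, I p0 l → (∃ x ∈ P', I x l) → l = m0)
    (hm0uniq' : ∀ l : L, I pbar l → (∃ x ∈ P', I x l) → l = m0) :
    ∀ n : L, (∀ p ∈ P', ¬ I p n) →
      (∑ k : L, (if (∀ p ∈ P', ¬ I p k) ∧ I p0 k then (1 : ℝ) else 0) *
          (if (∀ p ∈ P', ¬ I p k) ∧ Concurrent I k n then 1 else 0))
        = 1 + ((q : ℝ) - 2) * (if I p0 n then (1 : ℝ) else 0)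
          - (if Concurrent I n m0 ∧ ¬ I p0 n ∧ ¬ I pbar n then (1 : ℝ) else 0)
          - (if I pbar n then (1 : ℝ) else 0) :=
  statement_11_general hΓ P' p0 pbar hpp m0 hm0p0 hm0pbar hm0meets hm0uniq
end

section
/- Let Γ be a GQ of order (q²,q) with doubly subtended subquadrangle Γ' of order (q,q) and R a nontrivial relative m-cover (0 < m < q). If σ is the involutory automorphism fixing Γ' pointwise, then q is even, m = q/2, and R^σ is the complement of R in the set of external lines. -/
/-!
Let `l` be an external line. The lines of `L'` meeting `l` also meet `σl`, while no external line
meets both `l` and `σl`; so the lines meeting `l` and `σl` are the `q² + 1` lines of `L'` meeting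
`l`. Split `R` into the lines meeting `l`, those meeting `σl`, and the set `D` of the others. The
first two classes are counted along `l` and `σl`. For `D`, double count the pairs `(r, N)` with
`r ∈ D` and `N` a line of `L'` meeting `l` and `r`: each `r` has `q + 1` of them, the centres of
the triad `{l, σl, r}` of the dual GQ, of order `(q, q²)`; each `N` has `(q² - q) m - 2m`, because
a line of `R` meeting `N` and `l` passes through `N ∩ l` (there are no triangles). The outcome is
`|R| + q² e = (q² + 1) q m` with `e = |R ∩ {l, σl}|`, so `e` does not depend on `l`. Summing `e`
over the `q` external lines through an external point `x` counts each line of `R` through `x` or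
`σx` once, so `q e = 2m`, and `0 < m < q` forces `e = 1`.
-/

open Finset in
theorem Set.ncard_mul_eq_ncard_mul {α β : Type*} [Finite α] [Finite β] (r : α → β → Prop)
    {A : Set α} {B : Set β} {m n : ℕ} (hA : ∀ a ∈ A, {b ∈ B | r a b}.ncard = m)
    (hB : ∀ b ∈ B, {a ∈ A | r a b}.ncard = n) : A.ncard * m = B.ncard * n := by
  classical
  have := Fintype.ofFinite α
  have := Fintype.ofFinite β
  rw [Set.ncard_eq_toFinset_card' A, Set.ncard_eq_toFinset_card' B]
  refine card_mul_eq_card_mul r (fun a ha => ?_) (fun b hb => ?_)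
  · rw [← hA a (by simpa using ha), Set.ncard_eq_toFinset_card']
    congr 1; ext; simp [bipartiteAbove]
  · rw [← hB b (by simpa using hb), Set.ncard_eq_toFinset_card']
    congr 1; ext; simp [bipartiteBelow]

theorem Finset.eq_of_sum_eq_of_sum_mul_self_sub_eq {ι : Type*} {Z : Finset ι} {c : ι → ℕ}
    {k : ℕ} (h₁ : ∑ u ∈ Z, c u = Z.card * k)
    (h₂ : ∑ u ∈ Z, (c u * c u - c u) = Z.card * (k * k - k)) : ∀ u ∈ Z, c u = k := by
  have h₁' : ∑ u ∈ Z, (c u : ℤ) = Z.card * k := by exact_mod_cast h₁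
  have h₂' : ∑ u ∈ Z, ((c u : ℤ) * c u - c u) = Z.card * ((k : ℤ) * k - k) := by
    have := congrArg (Nat.cast : ℕ → ℤ) h₂
    push_cast [Nat.cast_sum, Nat.cast_sub (Nat.le_mul_self _)] at this
    exact this
  have hvar : ∑ u ∈ Z, ((c u : ℤ) - k) ^ 2 = 0 := by
    have : ∀ u ∈ Z, ((c u : ℤ) - k) ^ 2 = ((c u : ℤ) * c u - c u) + (1 - 2 * k) * c u + k ^ 2 :=
      fun u _ => by ring
    rw [sum_congr rfl this, sum_add_distrib, sum_add_distrib, ← mul_sum, h₁', h₂', sum_const,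
      nsmul_eq_mul]
    ring
  intro u hu
  have := (sum_eq_zero_iff_of_nonneg (fun u _ => sq_nonneg ((c u : ℤ) - k))).1 hvar u hu
  exact_mod_cast sub_eq_zero.1 (pow_eq_zero_iff two_ne_zero |>.1 this)

theorem Set.mem_iff_notMem_of_ncard_inter_pair_eq_one {α : Type*} {s : Set α} {a b : α}
    (hab : a ≠ b) (h : (s ∩ {a, b}).ncard = 1) : a ∈ s ↔ b ∉ s := by
  obtain ⟨c, hc⟩ := Set.ncard_eq_one.1 h
  have hmem : ∀ d ∈ ({a, b} : Set α), d ∈ s ↔ d = c := fun d hd => by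
    rw [← Set.mem_singleton_iff, ← hc]; simp [hd]
  rw [hmem a (by simp), hmem b (by simp)]
  have hc' : c ∈ s ∩ {a, b} := hc ▸ rfl
  rcases hc'.2 with rfl | rfl <;> simp [hab, Ne.symm hab]

theorem Function.Involutive.image_eq_sdiff {α : Type*} {f : α → α} (hf : Function.Involutive f)
    {E R : Set α} (hE : ∀ a ∈ E, f a ∈ E) (hR : R ⊆ E) (h : ∀ a ∈ E, a ∈ R ↔ f a ∉ R) :
    f '' R = E \ R := by
  ext b
  constructor
  · rintro ⟨a, ha, rfl⟩
    exact ⟨hE a (hR ha), (h a (hR ha)).1 ha⟩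
  · rintro ⟨hb, hbR⟩
    exact ⟨f b, not_not.1 (mt (h b hb).2 hbR), hf b⟩

def IsCollinear {P L : Type*} (I : P → L → Prop) (a b : P) : Prop := ∃ l, I a l ∧ I b l

theorem IsCollinear.symm {P L : Type*} {I : P → L → Prop} {a b : P} (h : IsCollinear I a b) :
    IsCollinear I b a :=
  let ⟨l, ha, hb⟩ := h; ⟨l, hb, ha⟩

theorem isCollinear_comm {P L : Type*} {I : P → L → Prop} {a b : P} :
    IsCollinear I a b ↔ IsCollinear I b a :=
  ⟨IsCollinear.symm, IsCollinear.symm⟩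

namespace GenQuad

variable {P L : Type*} {I : P → L → Prop} {s t : ℕ}

theorem dual (G : GenQuad P L I s t) : GenQuad L P (flip I) t s where
  unique_line _ _ hlm _ _ hal ham hbl hbm := by
    by_contra hab
    exact hlm (G.unique_line hab hal hbl ham hbm)
  point_lines := G.line_points
  line_points := G.point_lines
  gq l p hpl := by
    obtain ⟨r, ⟨hrl, n, hpn, hrn⟩, hru⟩ := G.gq p l hpl
    have hpr : p ≠ r := fun h => hpl (h ▸ hrl)
    refine ⟨n, ⟨hpn, r, hrl, hrn⟩, ?_⟩
    rintro n' ⟨hpn', r', hr'l, hr'n'⟩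
    obtain rfl : r' = r := hru r' ⟨hr'l, n', hpn', hr'n'⟩
    exact G.unique_line hpr hpn' hr'n' hpn hrn

theorem exists_incident_line (G : GenQuad P L I s t) (p : P) : ∃ l, I p l :=
  Set.nonempty_of_ncard_ne_zero (s := {l | I p l}) (by simp [G.point_lines p])

theorem isCollinear_self (G : GenQuad P L I s t) (a : P) : IsCollinear I a a :=
  let ⟨l, hl⟩ := G.exists_incident_line a; ⟨l, hl, hl⟩

theorem eq_of_isCollinear_of_isCollinear (G : GenQuad P L I s t) {p r r' : P} {l : L}
    (hpl : ¬ I p l) (hr : I r l ∧ IsCollinear I p r) (hr' : I r' l ∧ IsCollinear I p r') :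
    r = r' :=
  (G.gq p l hpl).unique hr hr'

/-- A GQ has no triangles. -/
theorem incident_of_isCollinear_flip (G : GenQuad P L I s t) {l m n : L} {u : P} (hlm : l ≠ m)
    (hul : I u l) (hum : I u m) (hnl : IsCollinear (flip I) n l)
    (hnm : IsCollinear (flip I) n m) : I u n := by
  obtain ⟨y, hyn, hyl⟩ := hnl
  obtain ⟨w, hwn, hwm⟩ := hnm
  by_cases hyu : y = u
  · exact hyu ▸ hyn
  have hym : ¬ I y m := fun hym => hyu (G.dual.unique_line hlm hyl hym hul hum)
  obtain rfl : w = u :=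
    G.eq_of_isCollinear_of_isCollinear hym ⟨hwm, n, hyn, hwn⟩ ⟨hum, l, hyl, hul⟩
  exact hwn

theorem not_isCollinear_of_mem_perp (G : GenQuad P L I s t) {a b w w' : P}
    (hab : ¬ IsCollinear I a b) (hw : IsCollinear I w a ∧ IsCollinear I w b)
    (hw' : IsCollinear I w' a ∧ IsCollinear I w' b) (hne : w ≠ w') : ¬ IsCollinear I w w' := by
  rintro ⟨n, hwn, hw'n⟩
  by_cases han : I a n
  · have hbn : ¬ I b n := fun hbn => hab ⟨n, han, hbn⟩
    exact hne (G.eq_of_isCollinear_of_isCollinear hbn ⟨hwn, hw.2.symm⟩ ⟨hw'n, hw'.2.symm⟩)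
  · exact hne (G.eq_of_isCollinear_of_isCollinear han ⟨hwn, hw.1.symm⟩ ⟨hw'n, hw'.1.symm⟩)

theorem eq_of_isCollinear_of_incident (G : GenQuad P L I s t) {w x u : P} {n nx : L}
    (hwx : w ≠ x) (hwnx : I w nx) (hxnx : I x nx) (hwn : I w n) (hun : I u n) (huw : u ≠ w)
    (hux : IsCollinear I u x) : n = nx := by
  by_contra hne
  obtain ⟨k, huk, hxk⟩ := hux
  have hwk : I w k := G.incident_of_isCollinear_flip hne hwn hwnx ⟨u, huk, hun⟩ ⟨x, hxk, hxnx⟩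
  obtain rfl : k = n := G.unique_line huw huk hwk hun hwn
  exact hne (G.unique_line hwx hwn hxk hwnx hxnx)

variable [Finite P] [Finite L]

theorem ncard_ne_incident_of_forall_incident (G : GenQuad P L I s t) {r : P} {M : Set L}
    (hM : ∀ n ∈ M, I r n) : {u | u ≠ r ∧ ∃ n ∈ M, I u n}.ncard = M.ncard * s := by
  have := Set.ncard_mul_eq_ncard_mul (fun u n => I u n) (m := 1) (n := s)
    (A := {u | u ≠ r ∧ ∃ n ∈ M, I u n}) (B := M) ?_ ?_
  · rwa [mul_one] at this
  · rintro u ⟨hur, n, hnM, hun⟩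
    refine Set.ncard_eq_one.2 ⟨n, Set.eq_singleton_iff_unique_mem.2 ⟨⟨hnM, hun⟩, ?_⟩⟩
    rintro n' ⟨hn'M, hun'⟩
    exact G.unique_line hur hun' (hM n' hn'M) hun (hM n hnM)
  · intro n hn
    have : {u ∈ {u | u ≠ r ∧ ∃ n ∈ M, I u n} | I u n} = {u | I u n} \ {r} := by
      ext u
      simp only [Set.mem_ofPred_eq, Set.mem_sdiff, Set.mem_singleton_iff]
      exact ⟨fun h => ⟨h.2, h.1.1⟩, fun h => ⟨⟨h.2, n, hn, h.1⟩, h.1⟩⟩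
    rw [this, Set.ncard_sdiff_singleton_of_mem (s := {u | I u n}) (hM n hn), G.line_points,
      Nat.add_sub_cancel]

theorem ncard_isCollinear (G : GenQuad P L I s t) (a : P) :
    {u | IsCollinear I u a}.ncard = (t + 1) * s + 1 := by
  have h : {u | IsCollinear I u a} = insert a {u | u ≠ a ∧ ∃ n ∈ {n | I a n}, I u n} := by
    ext u
    simp only [Set.mem_insert_iff, Set.mem_ofPred_eq, IsCollinear]
    by_cases hua : u = a
    · subst hua; simpa using G.exists_incident_line u
    · simp only [hua, false_or, ne_eq, not_false_eq_true, true_and]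
      exact ⟨fun ⟨l, hu, ha⟩ => ⟨l, ha, hu⟩, fun ⟨l, ha, hu⟩ => ⟨l, hu, ha⟩⟩
  rw [h, Set.ncard_insert_of_notMem (fun h => h.1 rfl),
    G.ncard_ne_incident_of_forall_incident (M := {n | I a n}) (fun _ h => h), G.point_lines]

theorem card_eq (G : GenQuad P L I s t) [Nonempty P] : Nat.card P = (s + 1) * (s * t + 1) := by
  obtain ⟨l, hl⟩ := G.exists_incident_line (Classical.arbitrary P)
  have hoff := Set.ncard_mul_eq_ncard_mul (fun z r => IsCollinear I z r) (m := 1) (n := t * s)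
    (A := {z | ¬ I z l}) (B := {r | I r l}) ?_ ?_
  · rw [mul_one, G.line_points] at hoff
    rw [← Set.ncard_add_ncard_compl {r | I r l}, Set.compl_ofPred, G.line_points, hoff]
    ring
  · intro z hz
    obtain ⟨r, hr, hr'⟩ := G.gq z l hz
    exact Set.ncard_eq_one.2 ⟨r, Set.eq_singleton_iff_unique_mem.2 ⟨hr, fun r' h => hr' r' h⟩⟩
  · intro r hr
    have : {z ∈ {z | ¬ I z l} | IsCollinear I z r} =
        {u | u ≠ r ∧ ∃ n ∈ {n | I r n ∧ n ≠ l}, I u n} := by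
      ext z
      simp only [Set.mem_ofPred_eq, IsCollinear]
      constructor
      · rintro ⟨hzl, n, hzn, hrn⟩
        exact ⟨fun h => hzl (h ▸ hr), n, ⟨hrn, fun h => hzl (h ▸ hzn)⟩, hzn⟩
      · rintro ⟨hzr, n, ⟨hrn, hnl⟩, hzn⟩
        exact ⟨fun hzl => hnl (G.unique_line hzr hzn hrn hzl hr), n, hzn, hrn⟩
    rw [this, G.ncard_ne_incident_of_forall_incident (fun _ h => h.1),
      show {n | I r n ∧ n ≠ l} = {n | I r n} \ {l} by ext; simp,
      Set.ncard_sdiff_singleton_of_mem (s := {n | I r n}) hr, G.point_lines, Nat.add_sub_cancel]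

theorem ncard_perp (G : GenQuad P L I s t) {a b : P} (hab : ¬ IsCollinear I a b) :
    {w | IsCollinear I w a ∧ IsCollinear I w b}.ncard = t + 1 := by
  have h := Set.ncard_mul_eq_ncard_mul (fun w l => I w l) (m := 1) (n := 1)
    (A := {w | IsCollinear I w a ∧ IsCollinear I w b}) (B := {l | I a l}) ?_ ?_
  · rwa [mul_one, mul_one, G.point_lines] at h
  · rintro w ⟨⟨l, hwl, hal⟩, hwb⟩
    have hwa : w ≠ a := by rintro rfl; exact hab hwb
    refine Set.ncard_eq_one.2 ⟨l, Set.eq_singleton_iff_unique_mem.2 ⟨⟨hal, hwl⟩, ?_⟩⟩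
    rintro l' ⟨hal', hwl'⟩
    exact G.unique_line hwa hwl' hal' hwl hal
  · intro l hal
    have hbl : ¬ I b l := fun hbl => hab ⟨l, hal, hbl⟩
    obtain ⟨w, ⟨hwl, hbw⟩, hwu⟩ := G.gq b l hbl
    refine Set.ncard_eq_one.2 ⟨w, Set.eq_singleton_iff_unique_mem.2
      ⟨⟨⟨⟨l, hwl, hal⟩, IsCollinear.symm (I := I) hbw⟩, hwl⟩, ?_⟩⟩
    rintro w' ⟨⟨_, hw'b⟩, hw'l⟩
    exact hwu w' ⟨hw'l, hw'b.symm⟩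

theorem ncard_not_isCollinear_not_isCollinear (G : GenQuad P L I s t) {x y : P}
    (hxy : ¬ IsCollinear I x y) :
    {u | ¬ IsCollinear I u x ∧ ¬ IsCollinear I u y}.ncard + 2 * ((t + 1) * s + 1) =
      (s + 1) * (s * t + 1) + (t + 1) := by
  have : Nonempty P := ⟨x⟩
  have hunion := Set.ncard_union_add_ncard_inter {u | IsCollinear I u x} {u | IsCollinear I u y}
  have hcompl := Set.ncard_add_ncard_compl ({u | IsCollinear I u x} ∪ {u | IsCollinear I u y})
  have hinter : {u | IsCollinear I u x} ∩ {u | IsCollinear I u y} =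
      {w | IsCollinear I w x ∧ IsCollinear I w y} := rfl
  have hcompl_eq : ({u | IsCollinear I u x} ∪ {u | IsCollinear I u y})ᶜ =
      {u | ¬ IsCollinear I u x ∧ ¬ IsCollinear I u y} := by
    ext u; simp
  rw [G.ncard_isCollinear, G.ncard_isCollinear, hinter, G.ncard_perp hxy] at hunion
  rw [G.card_eq, hcompl_eq] at hcompl
  omega

theorem ncard_not_isCollinear_not_isCollinear_isCollinear (G : GenQuad P L I s t) {x y w : P}
    (hxy : ¬ IsCollinear I x y) (hwx : IsCollinear I w x) (hwy : IsCollinear I w y) :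
    {u | ¬ IsCollinear I u x ∧ ¬ IsCollinear I u y ∧ IsCollinear I w u}.ncard = (t - 1) * s := by
  obtain ⟨nx, hwnx, hxnx⟩ := hwx
  obtain ⟨ny, hwny, hyny⟩ := hwy
  have hwx : w ≠ x := by rintro rfl; exact hxy ⟨ny, hwny, hyny⟩
  have hwy : w ≠ y := by rintro rfl; exact hxy ⟨nx, hxnx, hwnx⟩
  have hnxy : nx ≠ ny := by rintro rfl; exact hxy ⟨nx, hxnx, hyny⟩
  have hM : ({n | I w n} \ {nx, ny}).ncard = t - 1 := by
    rw [Set.ncard_sdiff' (by rintro n (rfl | rfl) <;> assumption), G.point_lines,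
      Set.ncard_pair hnxy]
    rfl
  have : {u | ¬ IsCollinear I u x ∧ ¬ IsCollinear I u y ∧ IsCollinear I w u} =
      {u | u ≠ w ∧ ∃ n ∈ {n | I w n} \ {nx, ny}, I u n} := by
    ext u
    simp only [Set.mem_ofPred_eq, Set.mem_sdiff, Set.mem_insert_iff, Set.mem_singleton_iff]
    constructor
    · rintro ⟨hux, huy, n, hwn, hun⟩
      have huw : u ≠ w := by rintro rfl; exact hux ⟨nx, hwnx, hxnx⟩
      refine ⟨huw, n, ⟨hwn, ?_⟩, hun⟩
      rintro (rfl | rfl)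
      exacts [hux ⟨n, hun, hxnx⟩, huy ⟨n, hun, hyny⟩]
    · rintro ⟨huw, n, ⟨hwn, hn⟩, hun⟩
      refine ⟨fun hux => hn (Or.inl ?_), fun huy => hn (Or.inr ?_), n, hwn, hun⟩
      exacts [G.eq_of_isCollinear_of_incident hwx hwnx hxnx hwn hun huw hux,
        G.eq_of_isCollinear_of_incident hwy hwny hyny hwn hun huw huy]
  rw [this, G.ncard_ne_incident_of_forall_incident (fun n hn => hn.1), hM]

theorem ncard_not_isCollinear_not_isCollinear_isCollinear_isCollinear (G : GenQuad P L I s t)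
    {x y w w' : P} (hxy : ¬ IsCollinear I x y) (hw : IsCollinear I w x ∧ IsCollinear I w y)
    (hw' : IsCollinear I w' x ∧ IsCollinear I w' y) (hne : w ≠ w') :
    {u | ¬ IsCollinear I u x ∧ ¬ IsCollinear I u y ∧ IsCollinear I w u ∧
      IsCollinear I w' u}.ncard = t - 1 := by
  have hww' := G.not_isCollinear_of_mem_perp hxy hw hw' hne
  have hx : x ∈ {v | IsCollinear I v w ∧ IsCollinear I v w'} := ⟨hw.1.symm, hw'.1.symm⟩
  have hy : y ∈ {v | IsCollinear I v w ∧ IsCollinear I v w'} := ⟨hw.2.symm, hw'.2.symm⟩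
  have hxy' : x ≠ y := by rintro rfl; exact hxy (G.isCollinear_self x)
  have : {u | ¬ IsCollinear I u x ∧ ¬ IsCollinear I u y ∧ IsCollinear I w u ∧
      IsCollinear I w' u} = {v | IsCollinear I v w ∧ IsCollinear I v w'} \ {x, y} := by
    ext u
    simp only [Set.mem_ofPred_eq, Set.mem_sdiff, Set.mem_insert_iff, Set.mem_singleton_iff,
      not_or]
    constructor
    · rintro ⟨hux, huy, hwu, hw'u⟩
      refine ⟨⟨hwu.symm, hw'u.symm⟩, ?_, ?_⟩ <;> rintro rfl
      exacts [hux (G.isCollinear_self u), huy (G.isCollinear_self u)]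
    · rintro ⟨hu, hux, huy⟩
      exact ⟨G.not_isCollinear_of_mem_perp hww' hu hx hux,
        G.not_isCollinear_of_mem_perp hww' hu hy huy, hu.1.symm, hu.2.symm⟩
  rw [this, Set.ncard_sdiff' (by rintro v (rfl | rfl) <;> assumption), G.ncard_perp hww',
    Set.ncard_pair hxy']
  rfl

section Moments

open Finset

variable [DecidableRel (IsCollinear I)] {x y : P} {T Z : Finset P}

theorem sum_card_filter_isCollinear (G : GenQuad P L I s t)
    (hT : ∀ w, w ∈ T ↔ IsCollinear I w x ∧ IsCollinear I w y)
    (hZ : ∀ u, u ∈ Z ↔ ¬ IsCollinear I u x ∧ ¬ IsCollinear I u y) (hxy : ¬ IsCollinear I x y) :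
    ∑ u ∈ Z, #{w ∈ T | IsCollinear I w u} = #T * ((t - 1) * s) := by
  calc ∑ u ∈ Z, #{w ∈ T | IsCollinear I w u}
      = ∑ w ∈ T, #{u ∈ Z | IsCollinear I w u} :=
        sum_card_bipartiteAbove_eq_sum_card_bipartiteBelow (fun u w => IsCollinear I w u)
    _ = ∑ _w ∈ T, (t - 1) * s := by
        refine sum_congr rfl fun w hw => ?_
        obtain ⟨hwx, hwy⟩ := (hT w).1 hw
        rw [← G.ncard_not_isCollinear_not_isCollinear_isCollinear hxy hwx hwy,
          ← Set.ncard_coe_finset]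
        congr 1; ext u; simp [hZ, and_assoc]
    _ = #T * ((t - 1) * s) := by rw [sum_const, smul_eq_mul]

theorem sum_card_filter_isCollinear_mul_self_sub (G : GenQuad P L I s t)
    (hT : ∀ w, w ∈ T ↔ IsCollinear I w x ∧ IsCollinear I w y)
    (hZ : ∀ u, u ∈ Z ↔ ¬ IsCollinear I u x ∧ ¬ IsCollinear I u y) (hxy : ¬ IsCollinear I x y) :
    ∑ u ∈ Z, (#{w ∈ T | IsCollinear I w u} * #{w ∈ T | IsCollinear I w u} -
      #{w ∈ T | IsCollinear I w u}) = (#T * #T - #T) * (t - 1) := by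
  calc _ = ∑ u ∈ Z, #{p ∈ T.offDiag | IsCollinear I p.1 u ∧ IsCollinear I p.2 u} := by
        refine sum_congr rfl fun u _ => ?_
        rw [← offDiag_card]
        congr 1; ext p; simp only [mem_offDiag, mem_filter]; tauto
    _ = ∑ p ∈ T.offDiag, #{u ∈ Z | IsCollinear I p.1 u ∧ IsCollinear I p.2 u} :=
        sum_card_bipartiteAbove_eq_sum_card_bipartiteBelow _
    _ = ∑ _p ∈ T.offDiag, (t - 1) := by
        refine sum_congr rfl fun p hp => ?_
        obtain ⟨hp₁, hp₂, hne⟩ := mem_offDiag.1 hp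
        rw [← G.ncard_not_isCollinear_not_isCollinear_isCollinear_isCollinear hxy
          ((hT _).1 hp₁) ((hT _).1 hp₂) hne, ← Set.ncard_coe_finset]
        congr 1; ext u; simp [hZ, and_assoc]
    _ = (#T * #T - #T) * (t - 1) := by rw [sum_const, smul_eq_mul, offDiag_card]

end Moments

open Finset in
/-- Over the points `u` collinear with neither `x` nor `y`, the number of centres of `{x, y, u}`
has mean `s + 1` and second moment `(s + 1)²`, so it is constant. -/
theorem ncard_centers_of_order_sq (G : GenQuad P L I s (s ^ 2)) {x y z : P}
    (hxy : ¬ IsCollinear I x y) (hxz : ¬ IsCollinear I x z) (hyz : ¬ IsCollinear I y z) :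
    {w | IsCollinear I w x ∧ IsCollinear I w y ∧ IsCollinear I w z}.ncard = s + 1 := by
  classical
  have := Fintype.ofFinite P
  set T := {w | IsCollinear I w x ∧ IsCollinear I w y}.toFinset
  set Z := {u | ¬ IsCollinear I u x ∧ ¬ IsCollinear I u y}.toFinset
  have hT : #T = s ^ 2 + 1 := by rw [← Set.ncard_eq_toFinset_card']; exact G.ncard_perp hxy
  have hZ : #Z + 2 * ((s ^ 2 + 1) * s + 1) = (s + 1) * (s * s ^ 2 + 1) + (s ^ 2 + 1) := by
    rw [← Set.ncard_eq_toFinset_card']; exact G.ncard_not_isCollinear_not_isCollinear hxy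
  have hzZ : z ∈ Z := Set.mem_toFinset.2 ⟨fun h => hxz h.symm, fun h => hyz h.symm⟩
  have hs : 1 ≤ s := by
    by_contra! hs
    obtain rfl : s = 0 := by omega
    exact notMem_empty z (card_eq_zero.1 (by simpa using hZ) ▸ hzZ)
  have hZc : (#Z : ℤ) = s * (s - 1) * (s ^ 2 + 1) := by
    have := congrArg (Nat.cast : ℕ → ℤ) hZ
    push_cast at this
    linear_combination this
  have hs2 : 1 ≤ s ^ 2 := Nat.one_le_pow _ _ hs
  have hmem : ∀ w, w ∈ T ↔ _ := fun w => Set.mem_toFinset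
  have hmem' : ∀ u, u ∈ Z ↔ _ := fun u => Set.mem_toFinset
  have key := eq_of_sum_eq_of_sum_mul_self_sub_eq (k := s + 1)
    ((G.sum_card_filter_isCollinear hmem hmem' hxy).trans ?_)
    ((G.sum_card_filter_isCollinear_mul_self_sub hmem hmem' hxy).trans ?_) z hzZ
  · rw [Set.ncard_eq_toFinset_card']
    convert key using 2
    ext w; simp [T, and_assoc]
  · zify [hs2]; rw [hZc, hT]; push_cast; ring
  · zify [hs2, Nat.le_mul_self #T, Nat.le_mul_self (s + 1)]; rw [hZc, hT]; push_cast; ring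

theorem ncard_mul_eq_ncard_isCollinear_flip (G : GenQuad P L I s t) {l : L} {X : Set P}
    {R : Set L} {m : ℕ} (hl : l ∉ R) (hX : ∀ x ∈ X, I x l)
    (hXR : ∀ r ∈ R, ∀ x, I x l → I x r → x ∈ X) (hm : ∀ x ∈ X, {r ∈ R | I x r}.ncard = m) :
    X.ncard * m = {r ∈ R | IsCollinear (flip I) r l}.ncard := by
  have h := Set.ncard_mul_eq_ncard_mul (fun x r => I x r) (m := m) (n := 1) (A := X)
    (B := {r ∈ R | IsCollinear (flip I) r l}) (fun x hx => ?_) ?_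
  · rwa [mul_one] at h
  · rw [← hm x hx]
    congr 1; ext r
    exact ⟨fun ⟨⟨hr, _⟩, hxr⟩ => ⟨hr, hxr⟩, fun ⟨hr, hxr⟩ => ⟨⟨hr, x, hxr, hX x hx⟩, hxr⟩⟩
  · rintro r ⟨hr, u, hur, hul⟩
    refine Set.ncard_eq_one.2 ⟨u, Set.eq_singleton_iff_unique_mem.2
      ⟨⟨hXR r hr u hul hur, hur⟩, fun y ⟨hy, hyr⟩ => ?_⟩⟩
    exact G.dual.unique_line (by rintro rfl; exact hl hr) hyr (hX y hy) hur hul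

end GenQuad

def externalLines {P L : Type*} (I : P → L → Prop) (P' : Set P) : Set L :=
  {l | ∀ p ∈ P', ¬ I p l}

/-- The involution `σ = (σP, σL)` of a doubly subtended subquadrangle `Γ' = (P', L')`, of order
`(q, q)`, of a GQ `Γ` of order `(q², q)`: an automorphism of order two fixing `Γ'` pointwise and
no external point or line. -/
structure IsSubtendingInvolution {P L : Type*} (I : P → L → Prop) (q : ℕ) (P' : Set P)
    (L' : Set L) (σP : P ≃ P) (σL : L ≃ L) : Prop where
  one_le : 1 ≤ q
  gq : GenQuad P L I (q ^ 2) q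
  sub : GenQuad P' L' (fun p l => I p.1 l.1) q q
  nonempty : P'.Nonempty
  mem_of_incident : ∀ p ∈ P', ∀ l, I p l → l ∈ L'
  incident_iff : ∀ p l, I p l ↔ I (σP p) (σL l)
  σP_σP : ∀ p, σP (σP p) = p
  σL_σL : ∀ l, σL (σL l) = l
  σP_eq : ∀ p ∈ P', σP p = p
  σP_ne : ∀ p ∉ P', σP p ≠ p
  σL_ne : ∀ l ∈ externalLines I P', σL l ≠ l

structure IsRelativeCover {P L : Type*} (I : P → L → Prop) (P' : Set P) (R : Set L) (m : ℕ) :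
    Prop where
  subset_externalLines : R ⊆ externalLines I P'
  ncard_incident : ∀ p ∉ P', {l ∈ R | I p l}.ncard = m

namespace IsSubtendingInvolution

variable {P L : Type*} {I : P → L → Prop} {q : ℕ} {P' : Set P} {L' : Set L} {σP : P ≃ P}
  {σL : L ≃ L} {R : Set L} {m : ℕ}

theorem σP_notMem (h : IsSubtendingInvolution I q P' L' σP σL) {x : P} (hx : x ∉ P') :
    σP x ∉ P' := fun hσx =>
  h.σP_ne x hx (by simpa [h.σP_σP, eq_comm] using h.σP_eq _ hσx)

theorem σL_mem_externalLines (h : IsSubtendingInvolution I q P' L' σP σL) {l : L}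
    (hl : l ∈ externalLines I P') : σL l ∈ externalLines I P' := fun p hp hpl =>
  hl p hp (by simpa [h.σP_eq p hp, h.σL_σL] using (h.incident_iff p _).1 hpl)

theorem σL_eq_of_mem (h : IsSubtendingInvolution I q P' L' σP σL) {l : L} (hl : l ∈ L') :
    σL l = l := by
  have h2 : 1 < {p : P' | I p.1 l}.ncard := by
    rw [h.sub.line_points ⟨l, hl⟩]; have := h.one_le; omega
  obtain ⟨p₁, p₂, hp₁, hp₂, hne⟩ :=
    (Set.one_lt_ncard_iff (Set.finite_of_ncard_ne_zero (by omega))).1 h2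
  have hσ : ∀ p : P', I p.1 l → I p.1 (σL l) := fun p hp => by
    simpa [h.σP_eq _ p.2] using (h.incident_iff _ _).1 hp
  exact h.gq.unique_line (Subtype.coe_ne_coe.2 hne) (hσ p₁ hp₁) (hσ p₂ hp₂) hp₁ hp₂

theorem incident_σP_of_mem (h : IsSubtendingInvolution I q P' L' σP σL) {x : P} {l : L}
    (hl : l ∈ L') (hxl : I x l) : I (σP x) l := by
  simpa [h.σL_eq_of_mem hl] using (h.incident_iff x l).1 hxl

theorem ncard_incident_of_mem (h : IsSubtendingInvolution I q P' L' σP σL) {l : L}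
    (hl : l ∈ L') : {p ∈ P' | I p l}.ncard = q + 1 := by
  rw [← h.sub.line_points ⟨l, hl⟩, ← Set.ncard_image_of_injective _ Subtype.val_injective]
  congr 1; ext p; simp [and_comm]

theorem mem_externalLines_iff (h : IsSubtendingInvolution I q P' L' σP σL) {l : L} :
    l ∈ externalLines I P' ↔ l ∉ L' := by
  refine ⟨fun hl hlL => ?_, fun hlL p hp hpl => hlL (h.mem_of_incident p hp l hpl)⟩
  obtain ⟨p, hp, hpl⟩ := Set.nonempty_of_ncard_ne_zero (s := {p ∈ P' | I p l})
    (by simp [h.ncard_incident_of_mem hlL])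
  exact hl p hp hpl

theorem eq_of_mem_of_incident (h : IsSubtendingInvolution I q P' L' σP σL) {x : P} (hx : x ∉ P')
    {l₁ l₂ : L} (hl₁ : l₁ ∈ L') (hl₂ : l₂ ∈ L') (hxl₁ : I x l₁) (hxl₂ : I x l₂) : l₁ = l₂ :=
  h.gq.unique_line (h.σP_ne x hx).symm hxl₁ (h.incident_σP_of_mem hl₁ hxl₁) hxl₂
    (h.incident_σP_of_mem hl₂ hxl₂)

theorem exists_mem_externalLines_incident (h : IsSubtendingInvolution I q P' L' σP σL) {x : P}
    (hx : x ∉ P') : ∃ l ∈ externalLines I P', I x l := by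
  have h2 : 1 < {l | I x l}.ncard := by rw [h.gq.point_lines]; have := h.one_le; omega
  obtain ⟨l₁, l₂, hl₁, hl₂, hne⟩ :=
    (Set.one_lt_ncard_iff (Set.finite_of_ncard_ne_zero (by omega))).1 h2
  by_contra! hE
  have hL' : ∀ l, I x l → l ∈ L' := fun l hxl =>
    by_contra fun hlL => hE l (h.mem_externalLines_iff.2 hlL) hxl
  exact hne (h.eq_of_mem_of_incident hx (hL' l₁ hl₁) (hL' l₂ hl₂) hl₁ hl₂)

theorem not_isCollinear_flip_σL (h : IsSubtendingInvolution I q P' L' σP σL) {l : L}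
    (hl : l ∈ externalLines I P') : ¬ IsCollinear (flip I) l (σL l) := by
  rintro ⟨z, hzl, hzσl⟩
  have hσz : I (σP z) l := by simpa [h.σL_σL] using (h.incident_iff z _).1 hzσl
  exact h.σL_ne l hl (h.gq.unique_line (h.σP_ne z fun hz => hl z hz hzl).symm hzσl
    ((h.incident_iff z l).1 hzl) hzl hσz)

variable [Finite P] [Finite L]

theorem ncard_mem_isCollinear_flip (h : IsSubtendingInvolution I q P' L' σP σL) {l : L}
    (hl : l ∈ externalLines I P') :
    {N ∈ L' | IsCollinear (flip I) N l}.ncard = q ^ 2 + 1 := by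
  have hcount := Set.ncard_mul_eq_ncard_mul (fun p N => I p N) (m := 1) (n := q + 1)
    (A := P') (B := {N ∈ L' | IsCollinear (flip I) N l}) ?_
    (fun N hN => h.ncard_incident_of_mem hN.1)
  · have : Nonempty P' := h.nonempty.to_subtype
    rw [mul_one, ← Nat.card_coe_set_eq, h.sub.card_eq] at hcount
    exact Nat.eq_of_mul_eq_mul_right (by omega : 0 < q + 1) (hcount.symm.trans (by ring))
  · intro p hp
    obtain ⟨N, ⟨hpN, r, hrl, hrN⟩, hN⟩ := h.gq.dual.gq l p (hl p hp)
    refine Set.ncard_eq_one.2 ⟨N, Set.eq_singleton_iff_unique_mem.2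
      ⟨⟨⟨h.mem_of_incident p hp N hpN, r, hrN, hrl⟩, hpN⟩, ?_⟩⟩
    rintro N' ⟨⟨-, r', hr'N', hr'l⟩, hpN'⟩
    exact hN N' ⟨hpN', r', hr'l, hr'N'⟩

/-- The `q² + 1` lines of `L'` meeting an external line `l` meet it in distinct points, so they
cover `l`; hence every external point is on exactly one line of `L'`. -/
theorem existsUnique_mem_incident (h : IsSubtendingInvolution I q P' L' σP σL) {x : P}
    (hx : x ∉ P') : ∃! N, N ∈ L' ∧ I x N := by
  refine existsUnique_of_exists_of_unique ?_
    fun N₁ N₂ h₁ h₂ => h.eq_of_mem_of_incident hx h₁.1 h₂.1 h₁.2 h₂.2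
  obtain ⟨l, hl, hxl⟩ := h.exists_mem_externalLines_incident hx
  have hlL := h.mem_externalLines_iff.1 hl
  have hcount := Set.ncard_mul_eq_ncard_mul (fun y N => I y N) (m := 1) (n := 1)
    (A := {y | I y l ∧ ∃ N ∈ L', I y N}) (B := {N ∈ L' | IsCollinear (flip I) N l}) ?_ ?_
  · rw [mul_one, mul_one, h.ncard_mem_isCollinear_flip hl, ← h.gq.line_points l] at hcount
    have hS := Set.eq_of_subset_of_ncard_le (fun y hy => hy.1) hcount.ge
    obtain ⟨-, N, hN, hxN⟩ : x ∈ {y | I y l ∧ ∃ N ∈ L', I y N} := hS ▸ hxl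
    exact ⟨N, hN, hxN⟩
  · rintro y ⟨hyl, N, hN, hyN⟩
    refine Set.ncard_eq_one.2
      ⟨N, Set.eq_singleton_iff_unique_mem.2 ⟨⟨⟨hN, y, hyN, hyl⟩, hyN⟩, ?_⟩⟩
    exact fun N' hN' => h.eq_of_mem_of_incident (fun hy => hl y hy hyl) hN'.1.1 hN hN'.2 hyN
  · rintro N ⟨hN, u, huN, hul⟩
    refine Set.ncard_eq_one.2
      ⟨u, Set.eq_singleton_iff_unique_mem.2 ⟨⟨⟨hul, N, hN, huN⟩, huN⟩, ?_⟩⟩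
    rintro y ⟨⟨hyl, -⟩, hyN⟩
    exact h.gq.dual.unique_line (by rintro rfl; exact hlL hN) hyN hyl huN hul

theorem not_incident_and_incident_σP (h : IsSubtendingInvolution I q P' L' σP σL) {x : P}
    (hx : x ∉ P') {r : L} (hr : r ∈ externalLines I P') : ¬ (I x r ∧ I (σP x) r) := by
  rintro ⟨hxr, hσxr⟩
  obtain ⟨N, ⟨hN, hxN⟩, -⟩ := h.existsUnique_mem_incident hx
  exact h.mem_externalLines_iff.1 hr
    (h.gq.unique_line (h.σP_ne x hx).symm hxN (h.incident_σP_of_mem hN hxN) hxr hσxr ▸ hN)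

theorem ncard_externalLines_incident (h : IsSubtendingInvolution I q P' L' σP σL) {x : P}
    (hx : x ∉ P') : {n ∈ externalLines I P' | I x n}.ncard = q := by
  obtain ⟨N, ⟨hN, hxN⟩, hNu⟩ := h.existsUnique_mem_incident hx
  have : {n ∈ externalLines I P' | I x n} = {n | I x n} \ {N} := by
    ext n
    simp only [Set.mem_ofPred_eq, Set.mem_sdiff, Set.mem_singleton_iff, h.mem_externalLines_iff]
    exact ⟨fun ⟨hn, hxn⟩ => ⟨hxn, by rintro rfl; exact hn hN⟩,
      fun ⟨hxn, hnN⟩ => ⟨fun hn => hnN (hNu n ⟨hn, hxn⟩), hxn⟩⟩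
  rw [this, Set.ncard_sdiff_singleton_of_mem (s := {n | I x n}) hxN, h.gq.point_lines,
    Nat.add_sub_cancel]

/-- The line of `L'` through `u = r ∩ l` passes through `σu ∈ σl`; as there are no triangles, `r`
passes through `σu` too, so `r` is that line of `L'`. -/
theorem not_isCollinear_flip_and_isCollinear_flip_σL
    (h : IsSubtendingInvolution I q P' L' σP σL) {l r : L} (hl : l ∈ externalLines I P')
    (hr : r ∈ externalLines I P') :
    ¬ (IsCollinear (flip I) r l ∧ IsCollinear (flip I) r (σL l)) := by
  rintro ⟨⟨u, hur, hul⟩, hrσl⟩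
  have hu : u ∉ P' := fun hu => hl u hu hul
  obtain ⟨N, ⟨hN, huN⟩, -⟩ := h.existsUnique_mem_incident hu
  have hNσl : N ≠ σL l := by
    rintro rfl; exact h.mem_externalLines_iff.1 (h.σL_mem_externalLines hl) hN
  exact h.not_incident_and_incident_σP hu hr ⟨hur, h.gq.incident_of_isCollinear_flip hNσl
    (h.incident_σP_of_mem hN huN) ((h.incident_iff u l).1 hul) ⟨u, hur, huN⟩ hrσl⟩

theorem isCollinear_flip_and_isCollinear_flip_σL_iff
    (h : IsSubtendingInvolution I q P' L' σP σL) {l N : L} (hl : l ∈ externalLines I P') :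
    IsCollinear (flip I) N l ∧ IsCollinear (flip I) N (σL l) ↔
      N ∈ L' ∧ IsCollinear (flip I) N l := by
  refine ⟨fun hN => ⟨by_contra fun hN' => ?_, hN.1⟩, fun ⟨hN, u, huN, hul⟩ => ?_⟩
  · exact h.not_isCollinear_flip_and_isCollinear_flip_σL hl (h.mem_externalLines_iff.2 hN') hN
  · exact ⟨⟨u, huN, hul⟩, σP u, h.incident_σP_of_mem hN huN, (h.incident_iff u l).1 hul⟩

/-- The triad `{l, σl, r}` of the dual GQ, of order `(q, q²)`, has `q + 1` centres, and these are
the lines of `L'` meeting `l` and `r`. -/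
theorem ncard_mem_isCollinear_flip_isCollinear_flip
    (h : IsSubtendingInvolution I q P' L' σP σL) {l r : L} (hl : l ∈ externalLines I P')
    (hrl : ¬ IsCollinear (flip I) r l) (hrσl : ¬ IsCollinear (flip I) r (σL l)) :
    {N ∈ L' | IsCollinear (flip I) N l ∧ IsCollinear (flip I) N r}.ncard = q + 1 := by
  rw [← h.gq.dual.ncard_centers_of_order_sq (h.not_isCollinear_flip_σL hl)
    (fun h' => hrl h'.symm) (fun h' => hrσl h'.symm)]
  congr 1; ext N
  simp only [Set.mem_ofPred_eq, ← and_assoc, h.isCollinear_flip_and_isCollinear_flip_σL_iff hl]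

theorem ncard_isCollinear_flip_of_mem (h : IsSubtendingInvolution I q P' L' σP σL)
    (hR : IsRelativeCover I P' R m) {N : L} (hN : N ∈ L') :
    {r ∈ R | IsCollinear (flip I) r N}.ncard = (q ^ 2 - q) * m := by
  have hX : {x | I x N ∧ x ∉ P'}.ncard = q ^ 2 - q := by
    have hsd : {x | I x N ∧ x ∉ P'} = {x | I x N} \ {p ∈ P' | I p N} := by
      ext x; simp only [Set.mem_ofPred_eq, Set.mem_sdiff]; tauto
    rw [hsd, Set.ncard_sdiff' fun p hp => hp.2, h.gq.line_points, h.ncard_incident_of_mem hN,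
      Nat.add_sub_add_right]
  rw [← hX]
  refine (h.gq.ncard_mul_eq_ncard_isCollinear_flip (fun hNR => ?_) (fun x hx => hx.1) ?_
    fun x hx => hR.ncard_incident x hx.2).symm
  · exact h.mem_externalLines_iff.1 (hR.subset_externalLines hNR) hN
  · exact fun r hr x hxN hxr => ⟨hxN, fun hx => hR.subset_externalLines hr x hx hxr⟩

theorem ncard_isCollinear_flip_add_of_mem_externalLines
    (h : IsSubtendingInvolution I q P' L' σP σL) (hR : IsRelativeCover I P' R m) {l : L}
    (hl : l ∈ externalLines I P') :
    {r ∈ R | IsCollinear (flip I) r l}.ncard + q ^ 2 * (R ∩ {l}).ncard = (q ^ 2 + 1) * m := by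
  have hm : ∀ x, I x l → {r ∈ R | I x r}.ncard = m := fun x hxl =>
    hR.ncard_incident x fun hx => hl x hx hxl
  by_cases hlR : l ∈ R
  · obtain ⟨x, hxl⟩ := h.gq.dual.exists_incident_line l
    have hm1 : 1 ≤ m := hm x hxl ▸ (Set.ncard_pos).2 ⟨l, hlR, hxl⟩
    have hcount := h.gq.ncard_mul_eq_ncard_isCollinear_flip (X := {x | I x l}) (R := R \ {l})
      (m := m - 1) (fun hl => hl.2 rfl) (fun x hx => hx) (fun _ _ x hx _ => hx) fun x hxl => by
        rw [← hm x hxl, ← Set.ncard_sdiff_singleton_of_mem (s := {r ∈ R | I x r}) ⟨hlR, hxl⟩]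
        congr 1; ext r; simp only [Set.mem_ofPred_eq, Set.mem_sdiff]; tauto
    have hsplit : {r ∈ R | IsCollinear (flip I) r l} =
        insert l {r ∈ R \ {l} | IsCollinear (flip I) r l} := by
      ext r
      simp only [Set.mem_insert_iff, Set.mem_ofPred_eq, Set.mem_sdiff, Set.mem_singleton_iff]
      constructor
      · rintro ⟨hr, hrl⟩
        by_cases hrl' : r = l
        exacts [Or.inl hrl', Or.inr ⟨⟨hr, hrl'⟩, hrl⟩]
      · rintro (rfl | ⟨⟨hr, -⟩, hrl⟩)
        exacts [⟨hlR, x, hxl, hxl⟩, ⟨hr, hrl⟩]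
    rw [hsplit, Set.ncard_insert_of_notMem fun hl => hl.1.2 rfl, ← hcount, h.gq.line_points,
      Set.inter_singleton_of_mem hlR, Set.ncard_singleton]
    obtain ⟨k, rfl⟩ := Nat.exists_eq_add_of_le' hm1
    simp only [Nat.add_sub_cancel]
    ring
  · rw [← h.gq.ncard_mul_eq_ncard_isCollinear_flip (X := {x | I x l}) hlR (fun x hx => hx)
      (fun _ _ x hx _ => hx) hm, Set.inter_singleton_of_notMem hlR, h.gq.line_points]
    simp

theorem ncard_not_isCollinear_flip_add_of_isCollinear_flip
    (h : IsSubtendingInvolution I q P' L' σP σL) (hR : IsRelativeCover I P' R m) {l N : L}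
    (hl : l ∈ externalLines I P') (hN : N ∈ L') (hNl : IsCollinear (flip I) N l) :
    {r ∈ R | ¬ IsCollinear (flip I) r l ∧ ¬ IsCollinear (flip I) r (σL l) ∧
      IsCollinear (flip I) r N}.ncard + 2 * m = (q ^ 2 - q) * m := by
  obtain ⟨u, huN, hul⟩ := hNl
  have hu : u ∉ P' := fun hu => hl u hu hul
  have hσuN := h.incident_σP_of_mem hN huN
  have hσuσl : I (σP u) (σL l) := (h.incident_iff u l).1 hul
  have hNl : N ≠ l := by rintro rfl; exact h.mem_externalLines_iff.1 hl hN
  have hNσl : N ≠ σL l := by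
    rintro rfl; exact h.mem_externalLines_iff.1 (h.σL_mem_externalLines hl) hN
  set D := {r ∈ R | ¬ IsCollinear (flip I) r l ∧ ¬ IsCollinear (flip I) r (σL l) ∧
      IsCollinear (flip I) r N}
  have hsplit : {r ∈ R | IsCollinear (flip I) r N} =
      (D ∪ {r ∈ R | I u r}) ∪ {r ∈ R | I (σP u) r} := by
    ext r
    simp only [Set.mem_union, Set.mem_ofPred_eq, D]
    constructor
    · rintro ⟨hr, hrN⟩
      by_cases hrl : IsCollinear (flip I) r l
      · exact Or.inl (Or.inr ⟨hr, h.gq.incident_of_isCollinear_flip hNl huN hul hrN hrl⟩)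
      by_cases hrσl : IsCollinear (flip I) r (σL l)
      · exact Or.inr ⟨hr, h.gq.incident_of_isCollinear_flip hNσl hσuN hσuσl hrN hrσl⟩
      · exact Or.inl (Or.inl ⟨hr, hrl, hrσl, hrN⟩)
    · rintro ((⟨hr, -, -, hrN⟩ | ⟨hr, hur⟩) | ⟨hr, hσur⟩)
      exacts [⟨hr, hrN⟩, ⟨hr, u, hur, huN⟩, ⟨hr, σP u, hσur, hσuN⟩]
  have hd₁ : Disjoint D {r ∈ R | I u r} :=
    Set.disjoint_left.2 fun r ⟨_, hrl, _⟩ ⟨_, hur⟩ => hrl ⟨u, hur, hul⟩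
  have hd₂ : Disjoint (D ∪ {r ∈ R | I u r}) {r ∈ R | I (σP u) r} := by
    refine Set.disjoint_left.2 ?_
    rintro r (⟨-, -, hrσl, -⟩ | ⟨hr, hur⟩) ⟨-, hσur⟩
    · exact hrσl ⟨σP u, hσur, hσuσl⟩
    · exact h.not_incident_and_incident_σP hu (hR.subset_externalLines hr) ⟨hur, hσur⟩
  rw [← h.ncard_isCollinear_flip_of_mem hR hN, hsplit, Set.ncard_union_eq hd₂,
    Set.ncard_union_eq hd₁, hR.ncard_incident u hu, hR.ncard_incident _ (h.σP_notMem hu)]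
  ring

theorem ncard_not_isCollinear_flip_mul (h : IsSubtendingInvolution I q P' L' σP σL)
    (hR : IsRelativeCover I P' R m) {l : L} (hl : l ∈ externalLines I P') :
    {r ∈ R | ¬ IsCollinear (flip I) r l ∧ ¬ IsCollinear (flip I) r (σL l)}.ncard * (q + 1) +
      (q ^ 2 + 1) * (2 * m) = (q ^ 2 + 1) * ((q ^ 2 - q) * m) := by
  have hcount := Set.ncard_mul_eq_ncard_mul (fun r N => IsCollinear (flip I) N r)
    (m := q + 1) (n := (q ^ 2 - q) * m - 2 * m)
    (A := {r ∈ R | ¬ IsCollinear (flip I) r l ∧ ¬ IsCollinear (flip I) r (σL l)})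
    (B := {N ∈ L' | IsCollinear (flip I) N l}) ?_ ?_
  · obtain ⟨N, hN, hNl⟩ := Set.nonempty_of_ncard_ne_zero
      (s := {N ∈ L' | IsCollinear (flip I) N l}) (by simp [h.ncard_mem_isCollinear_flip hl])
    have := h.ncard_not_isCollinear_flip_add_of_isCollinear_flip hR hl hN hNl
    rw [hcount, h.ncard_mem_isCollinear_flip hl, ← mul_add, Nat.sub_add_cancel (by omega)]
  · rintro r ⟨-, hrl, hrσl⟩
    rw [← h.ncard_mem_isCollinear_flip_isCollinear_flip hl hrl hrσl]
    congr 1; ext N; simp only [Set.mem_ofPred_eq, and_assoc]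
  · rintro N ⟨hN, hNl⟩
    rw [← h.ncard_not_isCollinear_flip_add_of_isCollinear_flip hR hl hN hNl, Nat.add_sub_cancel]
    congr 1; ext r; simp only [Set.mem_ofPred_eq, and_assoc, isCollinear_comm (a := N)]

theorem ncard_add_sq_mul_ncard_inter_pair (h : IsSubtendingInvolution I q P' L' σP σL)
    (hR : IsRelativeCover I P' R m) {l : L} (hl : l ∈ externalLines I P') :
    R.ncard + q ^ 2 * (R ∩ {l, σL l}).ncard = (q ^ 2 + 1) * q * m := by
  set A := {r ∈ R | IsCollinear (flip I) r l}
  set Aσ := {r ∈ R | IsCollinear (flip I) r (σL l)}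
  set D := {r ∈ R | ¬ IsCollinear (flip I) r l ∧ ¬ IsCollinear (flip I) r (σL l)}
  have hA := h.ncard_isCollinear_flip_add_of_mem_externalLines hR hl
  have hAσ := h.ncard_isCollinear_flip_add_of_mem_externalLines hR (h.σL_mem_externalLines hl)
  have hD := h.ncard_not_isCollinear_flip_mul hR hl
  have hpart : R.ncard = A.ncard + Aσ.ncard + D.ncard := by
    have hd₁ : Disjoint A Aσ := Set.disjoint_left.2 fun r hrA hrAσ =>
      h.not_isCollinear_flip_and_isCollinear_flip_σL hl (hR.subset_externalLines hrA.1)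
        ⟨hrA.2, hrAσ.2⟩
    have hd₂ : Disjoint (A ∪ Aσ) D := Set.disjoint_left.2 fun r hr hrD => by
      rcases hr with hr | hr
      exacts [hrD.2.1 hr.2, hrD.2.2 hr.2]
    rw [← Set.ncard_union_eq hd₁, ← Set.ncard_union_eq hd₂]
    congr 1; ext r
    simp only [Set.mem_union, Set.mem_ofPred_eq, A, Aσ, D]
    tauto
  have hpair : (R ∩ {l, σL l}).ncard = (R ∩ {l}).ncard + (R ∩ {σL l}).ncard := by
    rw [Set.insert_eq, Set.inter_union_distrib_left, Set.ncard_union_eq]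
    exact (Set.disjoint_singleton.2 (h.σL_ne l hl).symm).mono Set.inter_subset_right
      Set.inter_subset_right
  apply Nat.eq_of_mul_eq_mul_left (by omega : 0 < q + 1)
  have hq : q ≤ q ^ 2 := Nat.le_self_pow two_ne_zero q
  zify [hq] at hA hAσ hD hpart hpair ⊢
  linear_combination (q + 1 : ℤ) * hpart + (q + 1 : ℤ) * q ^ 2 * hpair + (q + 1 : ℤ) * hA +
    (q + 1 : ℤ) * hAσ + hD

theorem mul_eq_two_mul (h : IsSubtendingInvolution I q P' L' σP σL)
    (hR : IsRelativeCover I P' R m) {x : P} (hx : x ∉ P') {c : ℕ}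
    (hc : ∀ l ∈ externalLines I P', (R ∩ {l, σL l}).ncard = c) : q * c = 2 * m := by
  have hcount := Set.ncard_mul_eq_ncard_mul (fun n r => r ∈ ({n, σL n} : Set L))
    (m := c) (n := 1) (A := {n ∈ externalLines I P' | I x n})
    (B := {r ∈ R | I x r ∨ I (σP x) r}) ?_ ?_
  · have hB : {r ∈ R | I x r ∨ I (σP x) r}.ncard = 2 * m := by
      rw [Set.sep_or, Set.ncard_union_eq, hR.ncard_incident x hx,
        hR.ncard_incident _ (h.σP_notMem hx), two_mul]
      exact Set.disjoint_left.2 fun r ⟨hr, hxr⟩ ⟨_, hσxr⟩ =>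
        h.not_incident_and_incident_σP hx (hR.subset_externalLines hr) ⟨hxr, hσxr⟩
    rwa [h.ncard_externalLines_incident hx, hB, mul_one] at hcount
  · rintro n ⟨hn, hxn⟩
    rw [← hc n hn]
    congr 1; ext r
    simp only [Set.mem_ofPred_eq, Set.mem_inter_iff, Set.mem_insert_iff, Set.mem_singleton_iff]
    refine ⟨fun ⟨⟨hr, _⟩, hrn⟩ => ⟨hr, hrn⟩, fun ⟨hr, hrn⟩ => ⟨⟨hr, ?_⟩, hrn⟩⟩
    rcases hrn with rfl | rfl
    exacts [Or.inl hxn, Or.inr ((h.incident_iff x _).1 hxn)]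
  · rintro r ⟨hr, hxr | hσxr⟩
    · refine Set.ncard_eq_one.2 ⟨r, Set.eq_singleton_iff_unique_mem.2
        ⟨⟨⟨hR.subset_externalLines hr, hxr⟩, Or.inl rfl⟩, ?_⟩⟩
      rintro n ⟨⟨-, hxn⟩, rfl | rfl⟩
      · rfl
      · exact (h.not_incident_and_incident_σP hx (hR.subset_externalLines hr)
          ⟨hxr, (h.incident_iff x n).1 hxn⟩).elim
    · have hxσr : I x (σL r) := by simpa [h.σP_σP] using (h.incident_iff _ r).1 hσxr
      refine Set.ncard_eq_one.2 ⟨σL r, Set.eq_singleton_iff_unique_mem.2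
        ⟨⟨⟨h.σL_mem_externalLines (hR.subset_externalLines hr), hxσr⟩,
          Or.inr (h.σL_σL r).symm⟩, ?_⟩⟩
      rintro n ⟨⟨-, hxn⟩, rfl | rfl⟩
      · exact (h.not_incident_and_incident_σP hx (hR.subset_externalLines hr) ⟨hxn, hσxr⟩).elim
      · exact (h.σL_σL n).symm

theorem two_mul_eq_and_mem_iff (h : IsSubtendingInvolution I q P' L' σP σL)
    (hR : IsRelativeCover I P' R m) (hP' : P' ≠ Set.univ) (hm0 : 0 < m) (hmq : m < q) :
    2 * m = q ∧ ∀ l ∈ externalLines I P', l ∈ R ↔ σL l ∉ R := by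
  obtain ⟨x, hx⟩ := (Set.ne_univ_iff_exists_notMem P').1 hP'
  obtain ⟨l₀, hl₀, -⟩ := h.exists_mem_externalLines_incident hx
  have hc : ∀ l ∈ externalLines I P', (R ∩ {l, σL l}).ncard = (R ∩ {l₀, σL l₀}).ncard :=
    fun l hl => Nat.eq_of_mul_eq_mul_left (pow_pos (by omega) 2) <| Nat.add_left_cancel <|
      (h.ncard_add_sq_mul_ncard_inter_pair hR hl).trans
        (h.ncard_add_sq_mul_ncard_inter_pair hR hl₀).symm
  have hqc := h.mul_eq_two_mul hR hx hc
  have hc₂ : (R ∩ {l₀, σL l₀}).ncard ≤ 2 :=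
    (Set.ncard_inter_le_ncard_right _ _).trans ((Set.ncard_insert_le _ _).trans (by simp))
  have hc₁ : (R ∩ {l₀, σL l₀}).ncard = 1 := by
    interval_cases (R ∩ {l₀, σL l₀}).ncard <;> omega
  refine ⟨by rw [hc₁] at hqc; omega, fun l hl => ?_⟩
  exact Set.mem_iff_notMem_of_ncard_inter_pair_eq_one (h.σL_ne l hl).symm ((hc l hl).trans hc₁)

end IsSubtendingInvolution

theorem statement_14_general {P L : Type*} [Fintype P] [Fintype L] {I : P → L → Prop} {q m : ℕ}
    (hΓ : GenQuad P L I (q ^ 2) q)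
    (P' : Set P) (L' : Set L) (hPne : P'.Nonempty)
    (hPproper : P' ≠ Set.univ)
    (hsub : GenQuad P' L' (fun p l => I p.1 l.1) q q)
    (hlines : ∀ p ∈ P', ∀ l : L, I p l → l ∈ L')
    (σP : P ≃ P) (σL : L ≃ L)
    (hσI : ∀ (p : P) (l : L), I p l ↔ I (σP p) (σL l))
    (hσP2 : ∀ p, σP (σP p) = p) (hσL2 : ∀ l, σL (σL l) = l)
    (hσfix : ∀ p ∈ P', σP p = p)
    (hσmoveP : ∀ p : P, p ∉ P' → σP p ≠ p)
    (hσmoveL : ∀ l : L, (∀ p ∈ P', ¬ I p l) → σL l ≠ l)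
    (R : Set L) (hRext : ∀ l ∈ R, ∀ p ∈ P', ¬ I p l)
    (hcover : ∀ p : P, p ∉ P' → {l ∈ R | I p l}.ncard = m)
    (hm0 : 0 < m) (hmq : m < q) :
    Even q ∧ 2 * m = q ∧ σL '' R = {l : L | ∀ p ∈ P', ¬ I p l} \ R := by
  have h : IsSubtendingInvolution I q P' L' σP σL :=
    ⟨by omega, hΓ, hsub, hPne, hlines, hσI, hσP2, hσL2, hσfix, hσmoveP, hσmoveL⟩
  have hR : IsRelativeCover I P' R m := ⟨hRext, hcover⟩
  obtain ⟨hq, hmem⟩ := h.two_mul_eq_and_mem_iff hR hPproper hm0 hmq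
  exact ⟨⟨m, by omega⟩, hq, Function.Involutive.image_eq_sdiff hσL2
    (fun _ => h.σL_mem_externalLines) hR.subset_externalLines hmem⟩

/-- Main theorem: let `Γ` be a GQ of order `(q²,q)` with a doubly subtended
subquadrangle `Γ'` of order `(q,q)` (witnessed by the involutory automorphism
`(σP, σL)` fixing `Γ'` pointwise and moving every external point and external line),
and let `R` be a nontrivial relative `m`-cover (`0 < m < q`).  Then `q` is even,
`m = q/2`, and the image of `R` under the involution is the complement of `R` in the
set of external lines. -/
theorem statement_14 {P L : Type*} [Fintype P] [Fintype L] {I : P → L → Prop} {q m : ℕ}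
    (hq : 2 ≤ q)
    (hΓ : GenQuad P L I (q ^ 2) q)
    (P' : Set P) (L' : Set L) (hPne : P'.Nonempty)
    (hPproper : P' ≠ Set.univ) (hLproper : L' ≠ Set.univ)
    (hsub : GenQuad P' L' (fun p l => I p.1 l.1) q q)
    (hlines : ∀ p ∈ P', ∀ l : L, I p l → l ∈ L')
    (σP : P ≃ P) (σL : L ≃ L)
    (hσI : ∀ (p : P) (l : L), I p l ↔ I (σP p) (σL l))
    (hσP2 : ∀ p, σP (σP p) = p) (hσL2 : ∀ l, σL (σL l) = l)
    (hσfix : ∀ p ∈ P', σP p = p)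
    (hσmoveP : ∀ p : P, p ∉ P' → σP p ≠ p)
    (hσmoveL : ∀ l : L, (∀ p ∈ P', ¬ I p l) → σL l ≠ l)
    (R : Set L) (hRext : ∀ l ∈ R, ∀ p ∈ P', ¬ I p l)
    (hcover : ∀ p : P, p ∉ P' → {l ∈ R | I p l}.ncard = m)
    (hm0 : 0 < m) (hmq : m < q) :
    Even q ∧ 2 * m = q ∧ σL '' R = {l : L | ∀ p ∈ P', ¬ I p l} \ R :=
  statement_14_general hΓ P' L' hPne hPproper hsub hlines σP σL hσI hσP2 hσL2 hσfix hσmoveP hσmoveL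
    R hRext hcover hm0 hmq
end
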